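/- arXiv:1507.00600 — 3 statements merged into one kernel-verified Lean document; each statement's English description precedes it below -/
import Mathlib

section
/- Let τ be a binary relation on words over an alphabet Σ and fix a language M. If a language X satisfies X = μ(X), then ind(X) = X ∪ σ_X^∩(ind(X)). -/
open Set

/-- Image of a language under a binary word relation: τ(X) = {y | ∃ x ∈ X, τ(x,y)}. -/
def img {α : Type*} (τ : List α → List α → Prop) (X : Set (List α)) : Set (List α) :=
  {y | ∃ x ∈ X, τ x y}

/-- Inverse image: τ⁻¹(X) = {y | ∃ x ∈ X, τ(y,x)}. -/
def pre {α : Type*} (τ : List α → List α → Prop) (X : Set (List α)) : Set (List α) :=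
  {y | ∃ x ∈ X, τ y x}

/-- ind(X) = M \ (τ(X) ∪ τ⁻¹(X)). -/
def ind {α : Type*} (τ : List α → List α → Prop) (M X : Set (List α)) : Set (List α) :=
  M \ (img τ X ∪ pre τ X)

/-- The max-min operator μ(X) = ind(X) \ τ⁻¹(ind(X)). -/
def mu {α : Type*} (τ : List α → List α → Prop) (M X : Set (List α)) : Set (List α) :=
  ind τ M X \ pre τ (ind τ M X)

/-- σ_X(A) = τ⁻¹(A) ∩ ind(X). -/
def sig {α : Type*} (τ : List α → List α → Prop) (M X A : Set (List α)) : Set (List α) :=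
  pre τ A ∩ ind τ M X

/-- Φ^*(A) = ⋃_{i≥0} Φ^i(A). -/
def opStar {α : Type*} (Φ : Set (List α) → Set (List α)) (A : Set (List α)) : Set (List α) :=
  ⋃ i : ℕ, Φ^[i] A

/-- Φ^+(A) = ⋃_{i≥1} Φ^i(A). -/
def opPlus {α : Type*} (Φ : Set (List α) → Set (List α)) (A : Set (List α)) : Set (List α) :=
  ⋃ i ≥ 1, Φ^[i] A

/-- Φ^∩(A) = ⋂_{i≥1} Φ^i(A). -/
def opInter {α : Type*} (Φ : Set (List α) → Set (List α)) (A : Set (List α)) : Set (List α) :=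
  ⋂ i ≥ 1, Φ^[i] A

/-- Φ^{≥k}(A) = ⋃_{i≥k} Φ^i(A). -/
def opGe {α : Type*} (Φ : Set (List α) → Set (List α)) (k : ℕ) (A : Set (List α)) : Set (List α) :=
  ⋃ i ≥ k, Φ^[i] A

/-- A language is τ-independent if τ(L) ∩ L = ∅. -/
def indep {α : Type*} (τ : List α → List α → Prop) (L : Set (List α)) : Prop :=
  img τ L ∩ L = ∅

/-- τ is smooth (relative to M) if σ_X^∩(ind(X)) ⊆ σ_X^*(μ(X)) for every language X. -/
def smooth {α : Type*} (τ : List α → List α → Prop) (M : Set (List α)) : Prop :=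
  ∀ X : Set (List α), opInter (sig τ M X) (ind τ M X) ⊆ opStar (sig τ M X) (mu τ M X)

/-- L is P_τ-maximal relative to M: L ⊆ M, L is τ-independent, and no word of M \ L
can be added to L keeping τ-independence. -/
def maximalIndep {α : Type*} (τ : List α → List α → Prop) (M L : Set (List α)) : Prop :=
  L ⊆ M ∧ indep τ L ∧ ∀ w ∈ M \ L, ¬ indep τ (L ∪ {w})

section Operators

variable {α : Type*}

lemma subset_iterate_of_subset_apply {Φ : Set (List α) → Set (List α)} (hΦ : Monotone Φ)
    {A : Set (List α)} (hA : A ⊆ Φ A) (n : ℕ) : A ⊆ Φ^[n] A := by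
  simpa only [Function.iterate_id, id] using
    (Function.Commute.id_left (f := Φ)).iterate_le_of_map_le monotone_id hΦ hA n

lemma opInter_subset_apply (Φ : Set (List α) → Set (List α)) (A : Set (List α)) :
    opInter Φ A ⊆ Φ A :=
  biInter_subset_of_mem (show 1 ≥ 1 from le_rfl)

lemma subset_opInter_of_subset_apply {Φ : Set (List α) → Set (List α)} (hΦ : Monotone Φ)
    {A B : Set (List α)} (hA : A ⊆ Φ A) (hAB : A ⊆ B) : A ⊆ opInter Φ B :=
  subset_iInter₂ fun i _ => (subset_iterate_of_subset_apply hΦ hA i).trans (hΦ.iterate i hAB)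

end Operators

section Independence

variable {α : Type*} (τ : List α → List α → Prop) (M X : Set (List α))

lemma pre_mono : Monotone (pre τ) :=
  fun _ _ hAB _ ⟨x, hx, hτ⟩ => ⟨x, hAB hx, hτ⟩

lemma sig_mono : Monotone (sig τ M X) :=
  fun _ _ hAB => inter_subset_inter_left _ (pre_mono τ hAB)

lemma mu_subset_ind : mu τ M X ⊆ ind τ M X :=
  sdiff_subset

/-- A word of `ind(X) \ X` is not in `μ(X)`, so it has a `τ`-successor in `ind(X)`, which cannot
lie in `X` since then the word would be in `τ⁻¹(X)`. -/
lemma ind_diff_subset_sig (hX : mu τ M X ⊆ X) :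
    ind τ M X \ X ⊆ sig τ M X (ind τ M X \ X) := by
  rintro w ⟨hw, hwX⟩
  obtain ⟨x, hx, hτ⟩ : w ∈ pre τ (ind τ M X) := by
    by_contra hpre
    exact hwX (hX ⟨hw, hpre⟩)
  have hxX : x ∉ X := fun hxX => hw.2 (Or.inr ⟨x, hxX, hτ⟩)
  exact ⟨⟨x, ⟨hx, hxX⟩, hτ⟩, hw⟩

end Independence

theorem stmt7 {α : Type*} (τ : List α → List α → Prop) (M : Set (List α))
    (X : Set (List α)) (hX : X = mu τ M X) :
    ind τ M X = X ∪ opInter (sig τ M X) (ind τ M X) := by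
  have hXind : X ⊆ ind τ M X := hX.subset.trans (mu_subset_ind τ M X)
  have hdiff : ind τ M X \ X ⊆ opInter (sig τ M X) (ind τ M X) :=
    subset_opInter_of_subset_apply (sig_mono τ M X) (ind_diff_subset_sig τ M X hX.symm.subset)
      sdiff_subset
  exact subset_antisymm (sdiff_subset_iff.mp hdiff)
    (union_subset hXind ((opInter_subset_apply _ _).trans inter_subset_right))
end

section
/- Let τ be a smooth binary relation on words over an alphabet Σ and fix a language M. Then for every language X: ind(X) = σ_X^*(μ(X)) and μ(X) ∩ σ_X^+(μ(X)) = ∅. -/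
open Set

/-!
`ind(X)` splits as `μ(X) ∪ σ_X(ind(X))`, and `σ_X` distributes over unions, so a word of `ind(X)`
missed by every `σ_X^i(μ(X))` lies in every `σ_X^i(ind(X))`; smoothness rules such words out.
Disjointness holds because `σ_X^{i+1}(μ(X)) ⊆ τ⁻¹(ind(X))`, which `μ(X)` avoids by definition.
-/

section Iterate

variable {β : Type*} {Φ : Set β → Set β}

lemma iterate_map_union (hΦ : ∀ A B, Φ (A ∪ B) = Φ A ∪ Φ B) (n : ℕ) (A B : Set β) :
    Φ^[n] (A ∪ B) = Φ^[n] A ∪ Φ^[n] B := by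
  induction n generalizing A B with
  | zero => rfl
  | succ n ih => rw [Function.iterate_succ_apply, Function.iterate_succ_apply,
      Function.iterate_succ_apply, hΦ, ih]

lemma monotone_of_map_union (hΦ : ∀ A B, Φ (A ∪ B) = Φ A ∪ Φ B) : Monotone Φ := by
  intro A B h
  rw [← union_eq_right.2 h, hΦ]
  exact subset_union_left

lemma iterate_subset_of_eq_union (hΦ : ∀ A B, Φ (A ∪ B) = Φ A ∪ Φ B) {I m : Set β}
    (hI : I = m ∪ Φ I) (n : ℕ) : Φ^[n] m ⊆ I := by
  induction n with
  | zero => exact subset_union_left.trans hI.symm.subset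
  | succ n ih =>
    rw [Function.iterate_succ_apply']
    exact (monotone_of_map_union hΦ ih).trans (subset_union_right.trans hI.symm.subset)

lemma mem_iterate_of_notMem_iUnion_iterate (hΦ : ∀ A B, Φ (A ∪ B) = Φ A ∪ Φ B)
    {I m : Set β} (hI : I = m ∪ Φ I) {w : β} (hw : w ∈ I) (hwm : w ∉ ⋃ i, Φ^[i] m) (n : ℕ) :
    w ∈ Φ^[n] I := by
  induction n with
  | zero => exact hw
  | succ n ih =>
    rw [hI, iterate_map_union hΦ] at ih
    rcases ih with h | h
    · exact absurd (mem_iUnion.2 ⟨n, h⟩) hwm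
    · rwa [← Function.iterate_succ_apply] at h

lemma eq_iUnion_iterate_of_eq_union (hΦ : ∀ A B, Φ (A ∪ B) = Φ A ∪ Φ B) {I m : Set β}
    (hI : I = m ∪ Φ I) (hcore : ⋂ i ≥ 1, Φ^[i] I ⊆ ⋃ i, Φ^[i] m) :
    I = ⋃ i, Φ^[i] m := by
  refine subset_antisymm ?_ (iUnion_subset (iterate_subset_of_eq_union hΦ hI))
  intro w hw
  by_contra hwm
  exact hwm (hcore (mem_iInter₂.2 fun n _ => mem_iterate_of_notMem_iUnion_iterate hΦ hI hw hwm n))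

end Iterate

section Words

variable {α : Type*} (τ : List α → List α → Prop) (M X : Set (List α))

lemma pre_union (A B : Set (List α)) : pre τ (A ∪ B) = pre τ A ∪ pre τ B := by
  ext w
  simp only [pre, mem_union, mem_ofPred_eq, or_and_right, exists_or]

lemma pre_mono_s9 {A B : Set (List α)} (h : A ⊆ B) : pre τ A ⊆ pre τ B :=
  fun _ ⟨x, hx, hxw⟩ => ⟨x, h hx, hxw⟩

lemma sig_union (A B : Set (List α)) : sig τ M X (A ∪ B) = sig τ M X A ∪ sig τ M X B := by
  simp only [sig, pre_union, union_inter_distrib_right]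

lemma ind_eq_mu_union_sig : ind τ M X = mu τ M X ∪ sig τ M X (ind τ M X) := by
  ext w
  simp only [mu, sig, mem_union, mem_inter_iff, mem_sdiff]
  tauto

lemma mu_inter_opPlus_sig_mu :
    mu τ M X ∩ opPlus (sig τ M X) (mu τ M X) = ∅ := by
  refine eq_empty_of_forall_notMem fun w ⟨hwm, hw⟩ => ?_
  obtain ⟨i, hi, hwi⟩ := mem_iUnion₂.1 hw
  obtain ⟨n, rfl⟩ := Nat.exists_eq_add_of_le' hi
  rw [Function.iterate_succ_apply'] at hwi
  have hsub := iterate_subset_of_eq_union (sig_union τ M X) (ind_eq_mu_union_sig τ M X) n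
  exact hwm.2 (pre_mono_s9 τ hsub hwi.1)

end Words

theorem stmt9 {α : Type*} (τ : List α → List α → Prop) (M : Set (List α))
    (hsm : smooth τ M) (X : Set (List α)) :
    ind τ M X = opStar (sig τ M X) (mu τ M X) ∧
    mu τ M X ∩ opPlus (sig τ M X) (mu τ M X) = ∅ :=
  ⟨eq_iUnion_iterate_of_eq_union (sig_union τ M X) (ind_eq_mu_union_sig τ M X) (hsm X),
    mu_inter_opPlus_sig_mu τ M X⟩
end

section
/- Let τ be an input-altering, transitive, and smooth binary relation on words over an alphabet Σ, fix a language M, and let L ⊆ M be a τ-independent language. Then μ(L) is P_τ-maximal relative to M and contains L. -/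
open Set

/-!
Words of `ind(L)` that lie in every `σ_L^i(ind(L))` are caught by smoothness; any other word of
`ind(L)` leaves the chain at some step `i`, and such a word already lies in `σ_L^i(μ(L))`.
Either way it lies in `σ_L^*(μ(L))`, which by transitivity sits inside `μ(L) ∪ τ⁻¹(μ(L))`.
Hence every word of `M \ μ(L)` is τ-related to `μ(L)`: directly if it is in `ind(L) \ μ(L)`, and
through `L ⊆ μ(L)` otherwise.
-/

theorem Nat.exists_and_not_succ_of_not {p : ℕ → Prop} (h0 : p 0) {n : ℕ} (hn : ¬ p n) :
    ∃ k, p k ∧ ¬ p (k + 1) := by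
  induction n with
  | zero => exact absurd h0 hn
  | succ n ih =>
    by_cases h : p n
    · exact ⟨n, h, hn⟩
    · exact ih h

section

variable {α : Type*} (τ : List α → List α → Prop) (M : Set (List α))

theorem subset_ind_of_indep {L : Set (List α)} (hLM : L ⊆ M) (hL : indep τ L) :
    L ⊆ ind τ M L := by
  have hL := eq_empty_iff_forall_notMem.mp hL
  rintro x hx
  refine ⟨hLM hx, ?_⟩
  rintro (⟨y, hy, hyx⟩ | ⟨y, hy, hxy⟩)
  · exact hL x ⟨⟨y, hy, hyx⟩, hx⟩
  · exact hL y ⟨⟨x, hx, hxy⟩, hy⟩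

theorem subset_mu_of_subset_ind {L : Set (List α)} (hL : L ⊆ ind τ M L) : L ⊆ mu τ M L := by
  rintro x hx
  refine ⟨hL hx, ?_⟩
  rintro ⟨y, hy, hxy⟩
  exact hy.2 (Or.inl ⟨x, hx, hxy⟩)

theorem mu_subset (X : Set (List α)) : mu τ M X ⊆ M :=
  fun _ hx => hx.1.1

theorem indep_mu (X : Set (List α)) : indep τ (mu τ M X) := by
  refine eq_empty_iff_forall_notMem.mpr ?_
  rintro y ⟨⟨x, hx, hxy⟩, hy⟩
  exact hx.2 ⟨y, hy.1, hxy⟩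

theorem not_indep_union_singleton {S : Set (List α)} {w : List α}
    (h : (∃ y ∈ S, τ w y) ∨ (∃ x ∈ S, τ x w)) : ¬ indep τ (S ∪ {w}) := by
  intro hS
  have hS := eq_empty_iff_forall_notMem.mp hS
  rcases h with ⟨y, hy, hwy⟩ | ⟨x, hx, hxw⟩
  · exact hS y ⟨⟨w, Or.inr rfl, hwy⟩, Or.inl hy⟩
  · exact hS w ⟨⟨x, Or.inl hx, hxw⟩, Or.inr rfl⟩

theorem iterate_sig_subset_union_pre (htr : ∀ x y z : List α, τ x y → τ y z → τ x z)
    (X A : Set (List α)) (n : ℕ) : (sig τ M X)^[n] A ⊆ A ∪ pre τ A := by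
  induction n with
  | zero => exact subset_union_left
  | succ n ih =>
    rintro x hx
    rw [Function.iterate_succ_apply'] at hx
    obtain ⟨⟨y, hy, hxy⟩, -⟩ := hx
    rcases ih hy with hyA | ⟨z, hz, hyz⟩
    · exact Or.inr ⟨y, hyA, hxy⟩
    · exact Or.inr ⟨z, hz, htr _ _ _ hxy hyz⟩

theorem opStar_sig_subset_union_pre (htr : ∀ x y z : List α, τ x y → τ y z → τ x z)
    (X A : Set (List α)) : opStar (sig τ M X) A ⊆ A ∪ pre τ A :=
  iUnion_subset (iterate_sig_subset_union_pre τ M htr X A)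

theorem iterate_sig_ind_diff_subset (X : Set (List α)) (i : ℕ) :
    (sig τ M X)^[i] (ind τ M X) \ (sig τ M X)^[i + 1] (ind τ M X) ⊆
      (sig τ M X)^[i] (mu τ M X) := by
  induction i with
  | zero =>
    rintro x ⟨hx, hnx⟩
    exact ⟨hx, fun hpre => hnx ⟨hpre, hx⟩⟩
  | succ i ih =>
    rintro x ⟨hx, hnx⟩
    rw [Function.iterate_succ_apply'] at hx hnx ⊢
    obtain ⟨⟨y, hy, hxy⟩, hxind⟩ := hx
    have hny : y ∉ (sig τ M X)^[i + 1] (ind τ M X) := fun hy' => hnx ⟨⟨y, hy', hxy⟩, hxind⟩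
    exact ⟨⟨y, ih ⟨hy, hny⟩, hxy⟩, hxind⟩

theorem ind_subset_opStar_sig_mu (hsm : smooth τ M) (X : Set (List α)) :
    ind τ M X ⊆ opStar (sig τ M X) (mu τ M X) := by
  intro w hw
  by_cases hall : ∀ i, w ∈ (sig τ M X)^[i] (ind τ M X)
  · exact hsm X (mem_iInter₂.mpr fun i _ => hall i)
  · obtain ⟨n, hn⟩ := not_forall.mp hall
    obtain ⟨k, hk, hk1⟩ :=
      Nat.exists_and_not_succ_of_not (p := fun i => w ∈ (sig τ M X)^[i] (ind τ M X)) hw hn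
    exact mem_iUnion.mpr ⟨k, iterate_sig_ind_diff_subset τ M X k ⟨hk, hk1⟩⟩

theorem mem_pre_mu_of_mem_ind (htr : ∀ x y z : List α, τ x y → τ y z → τ x z)
    (hsm : smooth τ M) {X : Set (List α)} {w : List α} (hw : w ∈ ind τ M X)
    (hwmu : w ∉ mu τ M X) : w ∈ pre τ (mu τ M X) :=
  (opStar_sig_subset_union_pre τ M htr X _ (ind_subset_opStar_sig_mu τ M hsm X hw)).resolve_left
    hwmu

end

theorem stmt15_general {α : Type*} (τ : List α → List α → Prop) (M L : Set (List α))
    (htr : ∀ x y z : List α, τ x y → τ y z → τ x z)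
    (hsm : smooth τ M)
    (hLM : L ⊆ M) (hL : indep τ L) :
    maximalIndep τ M (mu τ M L) ∧ L ⊆ mu τ M L := by
  have hLmu : L ⊆ mu τ M L := subset_mu_of_subset_ind τ M (subset_ind_of_indep τ M hLM hL)
  refine ⟨⟨mu_subset τ M L, indep_mu τ M L, ?_⟩, hLmu⟩
  rintro w ⟨hwM, hwmu⟩
  apply not_indep_union_singleton
  by_cases hwind : w ∈ ind τ M L
  · exact Or.inl (mem_pre_mu_of_mem_ind τ M htr hsm hwind hwmu)
  · have hwL : w ∈ img τ L ∪ pre τ L := by_contra fun h => hwind ⟨hwM, h⟩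
    rcases hwL with ⟨x, hx, hxw⟩ | ⟨y, hy, hwy⟩
    · exact Or.inr ⟨x, hLmu hx, hxw⟩
    · exact Or.inl ⟨y, hLmu hy, hwy⟩

theorem stmt15 {α : Type*} (τ : List α → List α → Prop) (M L : Set (List α))
    (halt : ∀ w : List α, ¬ τ w w)
    (htr : ∀ x y z : List α, τ x y → τ y z → τ x z)
    (hsm : smooth τ M)
    (hLM : L ⊆ M) (hL : indep τ L) :
    maximalIndep τ M (mu τ M L) ∧ L ⊆ mu τ M L :=
  stmt15_general τ M L htr hsm hLM hL
end
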